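/- arXiv:1303.4171 — 2 statements merged into one kernel-verified Lean document; each statement's English description precedes it below -/
import Mathlib

section
/- Let Λ = (Λ_1, …, Λ_n) with Λ_p ∈ (1/2)ℤ, Λ_p − Λ_{p+1} ∈ ℤ_{>0} for p = 1, …, n−1, and Λ_n > 0. For 1 ≤ k ≤ n define μ^{(k)} = (μ^{(k)}_1, …, μ^{(k)}_{n-1}) by μ^{(k)}_p = Λ_p − (2n−1−2p)/2 for p < k and μ^{(k)}_p = Λ_{p+1} − (2n−1−2p)/2 for p ≥ k. Then a tuple γ = (γ_1,…,γ_{n-1}) interlaces both μ^{(i)} and μ^{(i-1)} (in the sense that μ_p ≥ γ_p ≥ μ_{p+1} for p ≤ n−2 and μ_{n-1} ≥ |γ_{n-1}|, with integrality μ_p − γ_p ∈ ℤ) for some 2 ≤ i ≤ n if and only if γ satisfies: Λ_p − n + p + 1/2 ≥ γ_p ≥ Λ_{p+1} − n + p + 3/2 for p = 1,…,i−2; Λ_{p+1} − n + p + 1/2 ≥ γ_p ≥ Λ_{p+2} − n + p + 3/2 for p = i−1,…,n−2; and Λ_n − 1/2 ≥ |γ_{n-1}|. -/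
/-!
Since `Λ` is decreasing, `μ^{(i-1)} ≤ μ^{(i)}` entrywise (they differ only at `p = i - 1`).
Interlacing both weights therefore amounts to `μ^{(i-1)}_p ≥ γ_p ≥ μ^{(i)}_{p+1}` together with
`μ^{(i-1)}_{n-1} ≥ |γ_{n-1}|`, and unfolding `μ^{(i-1)}_p` and `μ^{(i)}_{p+1}` on either side of
`p = i - 1` gives the two families of inequalities of the condition. Integrality is automatic:
all `Λ_p` are congruent to `Λ_1` modulo `ℤ`, and `γ_p + 1/2 ≡ Λ_1`.
-/

/-- The highest weight `μ_{0,k}` (1-indexed, with `ρ_m` subtracted) of the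
`M = Spin(2n−1)`-representation `δ_{0,k}` occurring in the principal series of
`Spin(2n,1)`: `μ^{(k)}_p = Λ_p − (2n−1−2p)/2` for `p < k`, `Λ_{p+1} − (2n−1−2p)/2` for `p ≥ k`. -/
noncomputable def muWt (n : ℕ) (Λ : ℕ → ℝ) (k : ℕ) : ℕ → ℝ :=
  fun p => if p < k then Λ p - (2*(n:ℝ) - 1 - 2*p)/2 else Λ (p+1) - (2*(n:ℝ) - 1 - 2*p)/2

/-- `γ` (a `Spin(2n−2)`-weight, 1-indexed with `n−1` entries) interlaces the
`Spin(2n−1)`-weight `μ` (with `n−1` entries), including the integrality condition. -/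
def InterlacesOdd (n : ℕ) (μ γ : ℕ → ℝ) : Prop :=
  (∀ p, 1 ≤ p → p ≤ n - 2 → μ p ≥ γ p ∧ γ p ≥ μ (p+1)) ∧
  μ (n-1) ≥ |γ (n-1)| ∧
  (∀ p, 1 ≤ p → p ≤ n - 1 → ∃ z : ℤ, μ p - γ p = z)

section Interlacing

variable {n : ℕ} {μ ν γ : ℕ → ℝ}

theorem interlacesOdd_and_interlacesOdd_iff (hn : 2 ≤ n)
    (hle : ∀ p, 1 ≤ p → p ≤ n - 1 → ν p ≤ μ p)
    (hμ : ∀ p, 1 ≤ p → p ≤ n - 1 → ∃ z : ℤ, μ p - γ p = z)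
    (hν : ∀ p, 1 ≤ p → p ≤ n - 1 → ∃ z : ℤ, ν p - γ p = z) :
    InterlacesOdd n μ γ ∧ InterlacesOdd n ν γ ↔
      (∀ p, 1 ≤ p → p ≤ n - 2 → ν p ≥ γ p ∧ γ p ≥ μ (p+1)) ∧ ν (n-1) ≥ |γ (n-1)| := by
  constructor
  · rintro ⟨⟨hμpair, -, -⟩, ⟨hνpair, hνend, -⟩⟩
    exact ⟨fun p h1 h2 => ⟨(hνpair p h1 h2).1, (hμpair p h1 h2).2⟩, hνend⟩
  · rintro ⟨hpair, hend⟩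
    refine ⟨⟨fun p h1 h2 => ?_, ?_, hμ⟩, ⟨fun p h1 h2 => ?_, hend, hν⟩⟩
    · have := hle p h1 (by omega)
      exact ⟨by linarith [hpair p h1 h2], (hpair p h1 h2).2⟩
    · linarith [hle (n-1) (by omega) le_rfl]
    · have := hle (p+1) (by omega) (by omega)
      exact ⟨(hpair p h1 h2).1, by linarith [hpair p h1 h2]⟩

end Interlacing

theorem exists_int_sub_of_forall_exists_int_sub_succ {f : ℕ → ℝ} {m : ℕ}
    (h : ∀ p, 1 ≤ p → p < m → ∃ z : ℤ, f p - f (p+1) = z) {q : ℕ} (hq1 : 1 ≤ q) (hqm : q ≤ m) :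
    ∃ z : ℤ, f q - f 1 = z := by
  induction q, hq1 using Nat.le_induction with
  | base => exact ⟨0, by simp⟩
  | succ q hq ih =>
    obtain ⟨w, hw⟩ := ih (by omega)
    obtain ⟨z, hz⟩ := h q hq (by omega)
    exact ⟨w - z, by push_cast; linarith⟩

section muWt

variable {n k l p : ℕ} {Λ : ℕ → ℝ}

theorem muWt_of_lt (h : p < k) : muWt n Λ k p = Λ p - n + p + 1/2 := by
  simp only [muWt, if_pos h]; ring

theorem muWt_of_le (h : k ≤ p) : muWt n Λ k p = Λ (p+1) - n + p + 1/2 := by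
  simp only [muWt, if_neg (not_lt.2 h)]; ring

theorem muWt_succ_of_lt (h : p + 1 < k) : muWt n Λ k (p+1) = Λ (p+1) - n + p + 3/2 := by
  rw [muWt_of_lt h]; push_cast; ring

theorem muWt_succ_of_le (h : k ≤ p + 1) : muWt n Λ k (p+1) = Λ (p+2) - n + p + 3/2 := by
  rw [muWt_of_le h]; push_cast; ring

theorem muWt_pred_of_le (hk : k ≤ n - 1) (hn : 1 ≤ n) : muWt n Λ k (n-1) = Λ n - 1/2 := by
  rw [muWt_of_le hk, Nat.sub_add_cancel hn, Nat.cast_sub hn]; push_cast; ring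

theorem muWt_le_muWt (hkl : k ≤ l) (hΛ : Λ (p+1) ≤ Λ p) : muWt n Λ k p ≤ muWt n Λ l p := by
  unfold muWt
  split_ifs <;> first | omega | linarith

theorem exists_int_muWt_sub {γ : ℕ → ℝ}
    (hgap : ∀ p, 1 ≤ p → p < n → ∃ z : ℤ, Λ p - Λ (p+1) = z)
    (hγ : ∃ z : ℤ, γ p + 1/2 - Λ 1 = z) (hp1 : 1 ≤ p) (hpn : p < n) :
    ∃ z : ℤ, muWt n Λ k p - γ p = z := by
  obtain ⟨z, hz⟩ := hγ
  -- `muWt n Λ k p - γ p = (Λ q - Λ 1) - (γ p + 1/2 - Λ 1) + p + 1 - n` with `q = p` or `p + 1`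
  by_cases hpk : p < k
  · obtain ⟨w, hw⟩ := exists_int_sub_of_forall_exists_int_sub_succ hgap hp1 hpn.le
    exact ⟨w - z + p + 1 - n, by rw [muWt_of_lt hpk]; push_cast; linarith⟩
  · obtain ⟨w, hw⟩ := exists_int_sub_of_forall_exists_int_sub_succ hgap (by omega) hpn
    exact ⟨w - z + p + 1 - n, by rw [muWt_of_le (not_lt.1 hpk)]; push_cast; linarith⟩

end muWt

theorem interlace_iff_condition_general (n : ℕ) (hn : 2 ≤ n) (Λ : ℕ → ℝ)
    (hgap : ∀ p, 1 ≤ p → p ≤ n - 1 → ∃ z : ℤ, Λ p - Λ (p+1) = z ∧ (0:ℝ) < z)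
    (γ : ℕ → ℝ) (hγ : ∀ p, 1 ≤ p → p ≤ n - 1 → ∃ z : ℤ, γ p + 1/2 - Λ 1 = z)
    (i : ℕ) (hi2 : 2 ≤ i) (hin : i ≤ n) :
    (InterlacesOdd n (muWt n Λ i) γ ∧ InterlacesOdd n (muWt n Λ (i-1)) γ) ↔
    ((∀ p, 1 ≤ p → p ≤ i - 2 →
        Λ p - n + p + 1/2 ≥ γ p ∧ γ p ≥ Λ (p+1) - n + p + 3/2) ∧
     (∀ p, i - 1 ≤ p → p ≤ n - 2 →
        Λ (p+1) - n + p + 1/2 ≥ γ p ∧ γ p ≥ Λ (p+2) - n + p + 3/2) ∧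
     Λ n - 1/2 ≥ |γ (n-1)|) := by
  have hgap_int : ∀ p, 1 ≤ p → p < n → ∃ z : ℤ, Λ p - Λ (p+1) = z := fun p h1 h2 =>
    (hgap p h1 (by omega)).imp fun _ hz => hz.1
  have hanti : ∀ p, 1 ≤ p → p ≤ n - 1 → Λ (p+1) ≤ Λ p := fun p h1 h2 => by
    obtain ⟨z, hz, hzpos⟩ := hgap p h1 h2
    linarith
  have hmuWt_int : ∀ k p, 1 ≤ p → p ≤ n - 1 → ∃ z : ℤ, muWt n Λ k p - γ p = z :=
    fun k p h1 h2 => exists_int_muWt_sub hgap_int (hγ p h1 h2) h1 (by omega)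
  rw [interlacesOdd_and_interlacesOdd_iff hn
    (fun p h1 h2 => muWt_le_muWt (Nat.sub_le i 1) (hanti p h1 h2))
    (hmuWt_int i) (hmuWt_int (i-1)), muWt_pred_of_le (by omega) (by omega)]
  constructor
  · rintro ⟨hpair, hend⟩
    refine ⟨fun p h1 h2 => ?_, fun p h1 h2 => ?_, hend⟩
    · simpa only [muWt_of_lt (by omega : p < i - 1), muWt_succ_of_lt (by omega : p + 1 < i)]
        using hpair p h1 (by omega)
    · simpa only [muWt_of_le h1, muWt_succ_of_le (by omega : i ≤ p + 1)]
        using hpair p (by omega) h2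
  · rintro ⟨hlow, hhigh, hend⟩
    refine ⟨fun p h1 h2 => ?_, hend⟩
    by_cases hp : p + 2 ≤ i
    · rw [muWt_of_lt (by omega), muWt_succ_of_lt (by omega)]
      exact hlow p h1 (by omega)
    · rw [muWt_of_le (by omega), muWt_succ_of_le (by omega)]
      exact hhigh p (by omega) h2

/-- Combinatorial core of Proposition 3.2: `γ` interlaces both `μ^{(i)}` and `μ^{(i-1)}`
if and only if `γ` satisfies condition (1.3) of Theorem 1.1. -/
theorem interlace_iff_condition (n : ℕ) (hn : 2 ≤ n) (Λ : ℕ → ℝ)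
    (hhalf : ∀ p, 1 ≤ p → p ≤ n → ∃ z : ℤ, 2 * Λ p = z)
    (hgap : ∀ p, 1 ≤ p → p ≤ n - 1 → ∃ z : ℤ, Λ p - Λ (p+1) = z ∧ (0:ℝ) < z)
    (hpos : 0 < Λ n)
    (γ : ℕ → ℝ) (hγ : ∀ p, 1 ≤ p → p ≤ n - 1 → ∃ z : ℤ, γ p + 1/2 - Λ 1 = z)
    (i : ℕ) (hi2 : 2 ≤ i) (hin : i ≤ n) :
    (InterlacesOdd n (muWt n Λ i) γ ∧ InterlacesOdd n (muWt n Λ (i-1)) γ) ↔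
    ((∀ p, 1 ≤ p → p ≤ i - 2 →
        Λ p - n + p + 1/2 ≥ γ p ∧ γ p ≥ Λ (p+1) - n + p + 3/2) ∧
     (∀ p, i - 1 ≤ p → p ≤ n - 2 →
        Λ (p+1) - n + p + 1/2 ≥ γ p ∧ γ p ≥ Λ (p+2) - n + p + 3/2) ∧
     Λ n - 1/2 ≥ |γ (n-1)|) :=
  interlace_iff_condition_general n hn Λ hgap γ hγ i hi2 hin
end

section
/- Let Λ_1 > … > Λ_n > |Λ_{n+1}| be half-integers with Λ_p − Λ_{p+1} ∈ ℤ_{>0} and Λ_n + Λ_{n+1} ∈ ℤ_{>0}. Define ρ_m = Σ_{p=1}^{n-1} (n−p) ε_p and for 1 ≤ i ≤ n+1 set μ^{(i)}_p = Λ_p − (n−p) for p < i and μ^{(i)}_p = Λ_{p+1} − (n−p) for i ≤ p ≤ n. Then a tuple γ = (γ_1, …, γ_{n-1}) (entries half-integers of the correct parity) interlaces both μ^{(i)} and μ^{(i-1)} — meaning μ_p ≥ γ_p ≥ μ_{p+1} for p = 1, …, n−1 with the last inequality being μ_{n-1} ≥ γ_{n-1} ≥ μ_n when restricting so(2n)-type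 weights, i.e. the Spin(2n)↓Spin(2n−1)-style branching condition — for some i ∈ {2, …, n+1} if and only if γ satisfies: Λ_p − n + p ≥ γ_p ≥ Λ_{p+1} − n + p + 1 for p = 1, …, i−2; Λ_{p+1} − n + p ≥ γ_p ≥ Λ_{p+2} − n + p + 1 for p = i−1, …, n−2; and Λ_n − 1 ≥ γ_{n-1} ≥ |Λ_{n+1}| when i ≤ n. -/
/-!
Since `Λ` decreases, the weights `μ^{(i-1)}` and `μ^{(i)}` agree except in entry `i - 1`, where
`μ^{(i-1)} ≤ μ^{(i)}`. Interlacing both therefore amounts to the upper bounds of the smaller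
weight `μ^{(i-1)}` together with the lower bounds of the larger weight `μ^{(i)}` (at the last
entry `|Λ_{n+1}| < Λ_n` makes `|μ^{(i)}_n|` the larger bound), and reading
off the entries of these two weights gives condition (1.6). The integrality part of
interlacing holds automatically because all `Λ_p` and `γ_p` differ from `Λ_1` by integers.
-/

/-- The highest weight `μ_{0,k}` (1-indexed, with `ρ_m = Σ_{p} (n−p) ε_p` subtracted)
of the `M = Spin(2n)`-representation `δ_{0,k}` in the principal series of
`Spin(2n+1,1)`: `μ^{(k)}_p = Λ_p − (n−p)` for `p < k`, `Λ_{p+1} − (n−p)` for `p ≥ k`. -/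
noncomputable def muWtOdd (n : ℕ) (Λ : ℕ → ℝ) (k : ℕ) : ℕ → ℝ :=
  fun p => if p < k then Λ p - ((n:ℝ) - p) else Λ (p+1) - ((n:ℝ) - p)

/-- The `Spin(2n) ↓ Spin(2n−1)` branching condition: the `Spin(2n−1)`-weight `γ`
(with `n−1` entries) interlaces the `Spin(2n)`-weight `μ` (with `n` entries):
`μ_p ≥ γ_p ≥ μ_{p+1}` for `p ≤ n−2`, `μ_{n-1} ≥ γ_{n-1} ≥ |μ_n|`, and `μ_p − γ_p ∈ ℤ`. -/
def InterlacesEven (n : ℕ) (μ γ : ℕ → ℝ) : Prop :=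
  (∀ p, 1 ≤ p → p ≤ n - 2 → μ p ≥ γ p ∧ γ p ≥ μ (p+1)) ∧
  μ (n-1) ≥ γ (n-1) ∧ γ (n-1) ≥ |μ n| ∧
  (∀ p, 1 ≤ p → p ≤ n - 1 → ∃ z : ℤ, μ p - γ p = z)

theorem interlacesEven_and_iff {n : ℕ} {μ ν γ : ℕ → ℝ} (hle : ∀ p ≤ n - 1, ν p ≤ μ p)
    (habs : |ν n| ≤ |μ n|) (hμ : ∀ p, 1 ≤ p → p ≤ n - 1 → ∃ z : ℤ, μ p - γ p = z)
    (hν : ∀ p, 1 ≤ p → p ≤ n - 1 → ∃ z : ℤ, ν p - γ p = z) :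
    InterlacesEven n μ γ ∧ InterlacesEven n ν γ ↔
      (∀ p, 1 ≤ p → p ≤ n - 2 → ν p ≥ γ p ∧ γ p ≥ μ (p+1)) ∧
        ν (n-1) ≥ γ (n-1) ∧ γ (n-1) ≥ |μ n| := by
  constructor
  · rintro ⟨⟨hμrow, -, hμlast, -⟩, ⟨hνrow, hνlast, -, -⟩⟩
    exact ⟨fun p h1 h2 => ⟨(hνrow p h1 h2).1, (hμrow p h1 h2).2⟩, hνlast, hμlast⟩
  · rintro ⟨hrow, hup, hlow⟩
    refine ⟨⟨fun p h1 h2 => ⟨(hrow p h1 h2).1.trans (hle p (by omega)), (hrow p h1 h2).2⟩,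
      hup.trans (hle _ le_rfl), hlow, hμ⟩,
      ⟨fun p h1 h2 => ⟨(hrow p h1 h2).1, (hle (p+1) (by omega)).trans (hrow p h1 h2).2⟩,
      hup, habs.trans hlow, hν⟩⟩

theorem exists_int_sub_of_forall_succ {f : ℕ → ℝ} {a m : ℕ}
    (h : ∀ p, a ≤ p → p ≤ m → ∃ z : ℤ, f p - f (p+1) = z) {q : ℕ} (haq : a ≤ q)
    (hq : q ≤ m + 1) : ∃ z : ℤ, f a - f q = z := by
  induction q, haq using Nat.le_induction with
  | base => exact ⟨0, by simp⟩
  | succ q haq ih =>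
    obtain ⟨x, hx⟩ := ih (by omega)
    obtain ⟨y, hy⟩ := h q haq (by omega)
    exact ⟨x + y, by push_cast; linarith⟩

section muWtOdd

variable {n : ℕ} {Λ γ : ℕ → ℝ} {k p : ℕ}

theorem muWtOdd_of_lt (h : p < k) : muWtOdd n Λ k p = Λ p - n + p := by
  simp only [muWtOdd, if_pos h]; ring

theorem muWtOdd_of_le (h : k ≤ p) : muWtOdd n Λ k p = Λ (p+1) - n + p := by
  simp only [muWtOdd, if_neg h.not_gt]; ring

theorem muWtOdd_last_of_le (h : k ≤ n) : muWtOdd n Λ k n = Λ (n+1) := by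
  rw [muWtOdd_of_le h]; ring

theorem muWtOdd_last_of_lt (h : n < k) : muWtOdd n Λ k n = Λ n := by
  rw [muWtOdd_of_lt h]; ring

theorem muWtOdd_pred_le (h : Λ k ≤ Λ (k-1)) : muWtOdd n Λ (k-1) p ≤ muWtOdd n Λ k p := by
  unfold muWtOdd
  split_ifs with h1 h2 h2
  · rfl
  · omega
  · obtain rfl : p + 1 = k := by omega
    simpa using h
  · rfl

theorem exists_int_muWtOdd_sub (hgap : ∀ p, 1 ≤ p → p ≤ n → ∃ z : ℤ, Λ p - Λ (p+1) = z)
    (hγ : ∀ p, 1 ≤ p → p ≤ n - 1 → ∃ z : ℤ, γ p - Λ 1 = z) (h1 : 1 ≤ p) (h2 : p ≤ n - 1) :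
    ∃ z : ℤ, muWtOdd n Λ k p - γ p = z := by
  obtain ⟨b, hb⟩ := hγ p h1 h2
  have hΛ : ∀ q, 1 ≤ q → q ≤ n + 1 → ∃ z : ℤ, Λ q - n + p - γ p = z := by
    intro q hq1 hq2
    obtain ⟨a, ha⟩ := exists_int_sub_of_forall_succ hgap hq1 hq2
    exact ⟨-a - b + p - n, by push_cast; linarith⟩
  by_cases hpk : p < k
  · rw [muWtOdd_of_lt hpk]; exact hΛ p h1 (by omega)
  · rw [muWtOdd_of_le (by omega)]; exact hΛ (p+1) (by omega) (by omega)

end muWtOdd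

/-- Condition (1.6) of the paper. -/
def ConditionOdd (n : ℕ) (Λ γ : ℕ → ℝ) (i : ℕ) : Prop :=
  (∀ p, 1 ≤ p → p ≤ i - 2 → Λ p - n + p ≥ γ p ∧ γ p ≥ Λ (p+1) - n + p + 1) ∧
    (∀ p, i - 1 ≤ p → p ≤ n - 2 → Λ (p+1) - n + p ≥ γ p ∧ γ p ≥ Λ (p+2) - n + p + 1) ∧
    (i ≤ n → Λ n - 1 ≥ γ (n-1) ∧ γ (n-1) ≥ |Λ (n+1)|)

section conditionOdd

variable {n i p : ℕ} {Λ γ : ℕ → ℝ}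

theorem muWtOdd_rows_iff_of_lt (h : p + 1 < i) :
    (muWtOdd n Λ (i-1) p ≥ γ p ∧ γ p ≥ muWtOdd n Λ i (p+1)) ↔
      (Λ p - n + p ≥ γ p ∧ γ p ≥ Λ (p+1) - n + p + 1) := by
  rw [muWtOdd_of_lt (by omega), muWtOdd_of_lt h, Nat.cast_succ, ← add_assoc]

theorem muWtOdd_rows_iff_of_le (h : i ≤ p + 1) :
    (muWtOdd n Λ (i-1) p ≥ γ p ∧ γ p ≥ muWtOdd n Λ i (p+1)) ↔
      (Λ (p+1) - n + p ≥ γ p ∧ γ p ≥ Λ (p+2) - n + p + 1) := by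
  rw [muWtOdd_of_le (by omega), muWtOdd_of_le h, Nat.cast_succ, ← add_assoc]

theorem muWtOdd_pred_last_of_le (hn : 1 ≤ n) (h : i ≤ n - 1) :
    muWtOdd n Λ i (n-1) = Λ n - 1 := by
  rw [muWtOdd_of_le h, Nat.sub_add_cancel hn, Nat.cast_pred hn]; ring

theorem muWtOdd_pred_last_of_lt (hn : 1 ≤ n) (h : n - 1 < i) :
    muWtOdd n Λ i (n-1) = Λ (n-1) - 1 := by
  rw [muWtOdd_of_lt h, Nat.cast_pred hn]; ring

theorem muWtOdd_bounds_iff_conditionOdd (hn : 2 ≤ n) (hi : 2 ≤ i) (hin : i ≤ n + 1) (hΛn : 0 ≤ Λ n) :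
    ((∀ p, 1 ≤ p → p ≤ n - 2 → muWtOdd n Λ (i-1) p ≥ γ p ∧ γ p ≥ muWtOdd n Λ i (p+1)) ∧
      muWtOdd n Λ (i-1) (n-1) ≥ γ (n-1) ∧ γ (n-1) ≥ |muWtOdd n Λ i n|) ↔
      ConditionOdd n Λ γ i := by
  rcases hin.lt_or_eq with hin | rfl
  · rw [muWtOdd_pred_last_of_le (by omega) (by omega), muWtOdd_last_of_le (by omega)]
    constructor
    · rintro ⟨hrow, hlast⟩
      exact ⟨fun p h1 h2 => (muWtOdd_rows_iff_of_lt (by omega)).1 (hrow p h1 (by omega)),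
        fun p h1 h2 => (muWtOdd_rows_iff_of_le (by omega)).1 (hrow p (by omega) h2),
        fun _ => hlast⟩
    · rintro ⟨hA, hB, hC⟩
      refine ⟨fun p h1 h2 => ?_, hC (by omega)⟩
      rcases lt_or_ge (p + 1) i with h | h
      · exact (muWtOdd_rows_iff_of_lt h).2 (hA p h1 (by omega))
      · exact (muWtOdd_rows_iff_of_le h).2 (hB p (by omega) h2)
  · have hA_last : (Λ (n-1) - n + (n-1 : ℕ) ≥ γ (n-1) ∧ γ (n-1) ≥ Λ (n-1+1) - n + (n-1 : ℕ) + 1)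
        ↔ (Λ (n-1) - 1 ≥ γ (n-1) ∧ γ (n-1) ≥ Λ n) := by
      rw [Nat.sub_add_cancel (by omega), Nat.cast_pred (by omega)]; ring_nf
    rw [muWtOdd_pred_last_of_lt (by omega) (by omega), muWtOdd_last_of_lt (by omega),
      abs_of_nonneg hΛn, ← hA_last]
    constructor
    · rintro ⟨hrow, hlast⟩
      refine ⟨fun p h1 h2 => ?_, fun p h1 h2 => by omega, fun h => by omega⟩
      rcases lt_or_ge p (n - 1) with h | h
      · exact (muWtOdd_rows_iff_of_lt (by omega)).1 (hrow p h1 (by omega))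
      · obtain rfl : p = n - 1 := by omega
        exact hlast
    · rintro ⟨hA, -, -⟩
      exact ⟨fun p h1 h2 => (muWtOdd_rows_iff_of_lt (by omega)).2 (hA p h1 (by omega)),
        hA (n-1) (by omega) (by omega)⟩

end conditionOdd

theorem interlace_iff_condition_odd_general (n : ℕ) (hn : 2 ≤ n) (Λ : ℕ → ℝ)
    (hgap : ∀ p, 1 ≤ p → p ≤ n → ∃ z : ℤ, Λ p - Λ (p+1) = z ∧ (0:ℝ) < z)
    (habs : |Λ (n+1)| < Λ n)
    (γ : ℕ → ℝ) (hγ : ∀ p, 1 ≤ p → p ≤ n - 1 → ∃ z : ℤ, γ p - Λ 1 = z)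
    (i : ℕ) (hi : 2 ≤ i) (hin : i ≤ n + 1) :
    (InterlacesEven n (muWtOdd n Λ i) γ ∧ InterlacesEven n (muWtOdd n Λ (i-1)) γ) ↔
    ((∀ p, 1 ≤ p → p ≤ i - 2 →
        Λ p - n + p ≥ γ p ∧ γ p ≥ Λ (p+1) - n + p + 1) ∧
     (∀ p, i - 1 ≤ p → p ≤ n - 2 →
        Λ (p+1) - n + p ≥ γ p ∧ γ p ≥ Λ (p+2) - n + p + 1) ∧
     (i ≤ n → Λ n - 1 ≥ γ (n-1) ∧ γ (n-1) ≥ |Λ (n+1)|)) := by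
  have hΛi : Λ i ≤ Λ (i-1) := by
    obtain ⟨z, hz, hz0⟩ := hgap (i-1) (by omega) (by omega)
    rw [Nat.sub_add_cancel (by omega)] at hz
    linarith
  have hint : ∀ k p, 1 ≤ p → p ≤ n - 1 → ∃ z : ℤ, muWtOdd n Λ k p - γ p = z :=
    fun _ _ => exists_int_muWtOdd_sub (fun p h1 h2 => (hgap p h1 h2).imp fun _ => And.left) hγ
  have hlast : |muWtOdd n Λ (i-1) n| ≤ |muWtOdd n Λ i n| := by
    rw [muWtOdd_last_of_le (by omega)]
    rcases hin.lt_or_eq with hin | rfl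
    · rw [muWtOdd_last_of_le (by omega)]
    · rw [muWtOdd_last_of_lt (by omega)]
      exact habs.le.trans (le_abs_self _)
  exact (interlacesEven_and_iff (fun p _ => muWtOdd_pred_le (p := p) hΛi) hlast (hint i)
    (hint (i-1))).trans (muWtOdd_bounds_iff_conditionOdd hn hi hin ((abs_nonneg _).trans habs.le))

/-- Combinatorial content of Proposition 3.4 / Theorem 1.2(1) for `Spin(2n+1,1)`:
`σ_γ` embeds in both `δ_{0,i}|_{M^η}` and `δ_{0,i-1}|_{M^η}` — i.e. `γ` interlaces
both `μ^{(i)}` and `μ^{(i-1)}` — if and only if `γ` satisfies condition (1.6). -/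
theorem interlace_iff_condition_odd (n : ℕ) (hn : 2 ≤ n) (Λ : ℕ → ℝ)
    (hhalf : ∀ p, 1 ≤ p → p ≤ n + 1 → ∃ z : ℤ, 2 * Λ p = z)
    (hgap : ∀ p, 1 ≤ p → p ≤ n → ∃ z : ℤ, Λ p - Λ (p+1) = z ∧ (0:ℝ) < z)
    (hsum : ∃ z : ℤ, Λ n + Λ (n+1) = z ∧ (0:ℝ) < z)
    (habs : |Λ (n+1)| < Λ n)
    (γ : ℕ → ℝ) (hγ : ∀ p, 1 ≤ p → p ≤ n - 1 → ∃ z : ℤ, γ p - Λ 1 = z)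
    (i : ℕ) (hi : 2 ≤ i) (hin : i ≤ n + 1) :
    (InterlacesEven n (muWtOdd n Λ i) γ ∧ InterlacesEven n (muWtOdd n Λ (i-1)) γ) ↔
    ((∀ p, 1 ≤ p → p ≤ i - 2 →
        Λ p - n + p ≥ γ p ∧ γ p ≥ Λ (p+1) - n + p + 1) ∧
     (∀ p, i - 1 ≤ p → p ≤ n - 2 →
        Λ (p+1) - n + p ≥ γ p ∧ γ p ≥ Λ (p+2) - n + p + 1) ∧
     (i ≤ n → Λ n - 1 ≥ γ (n-1) ∧ γ (n-1) ≥ |Λ (n+1)|)) :=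
  interlace_iff_condition_odd_general n hn Λ hgap habs γ hγ i hi hin
end
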